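/- arXiv:1108.0456 — 5 statements merged into one kernel-verified Lean document; each statement's English description precedes it below -/
import Mathlib

section
/- Every point x of a convex set C determines a unique face F of C such that x is an algebraic interior point of F, and F is the smallest face of C containing x. -/
variable {V : Type*} [AddCommGroup V] [Module ℝ V]

/-- `F` is a face of the convex set `C`: a convex subset such that whenever a point of
`F` is a nontrivial convex combination of two points of `C`, both points lie in `F`. -/
def IsFace (C F : Set V) : Prop :=
  F ⊆ C ∧ Convex ℝ F ∧
    ∀ x ∈ C, ∀ y ∈ C, ∀ t : ℝ, 0 < t → t < 1 →
      t • x + (1 - t) • y ∈ F → x ∈ F ∧ y ∈ F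

/-- `x` is an algebraic interior point of the convex set `F`. -/
def IsAlgInterior (F : Set V) (x : V) : Prop :=
  x ∈ F ∧ ∀ y ∈ F, ∃ t : ℝ, 1 < t ∧ (1 - t) • y + t • x ∈ F

/-!
The face in question consists of the points `y ∈ C` for which the segment from `y` to `x`
can be prolonged beyond `x` inside `C`, i.e. `x + c • (x - y) ∈ C` for some `c > 0`.
Then `x` is a nontrivial convex combination of `y` and `x + c • (x - y)`, so every face
through `x` contains `y`; and `x` is an algebraic interior point because a prolongation
point `x + s • (x - y)` with `0 < s ≤ c` can itself be prolonged beyond `x`, back to `y`.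
Uniqueness follows from minimality.
-/

theorem Convex.add_smul_mem_of_le {C : Set V} (hC : Convex ℝ C) {x v : V} (hx : x ∈ C)
    {c s : ℝ} (hv : x + c • v ∈ C) (hs : 0 ≤ s) (hsc : s ≤ c) : x + s • v ∈ C := by
  rcases hs.eq_or_lt with rfl | hs
  · simpa using hx
  have hc : 0 < c := hs.trans_le hsc
  have h := hC.add_smul_mem hx hv (t := s / c) ⟨by positivity, (div_le_one hc).2 hsc⟩
  rwa [smul_smul, div_mul_cancel₀ s hc.ne'] at h

def minimalFace (C : Set V) (x : V) : Set V :=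
  {y ∈ C | ∃ c : ℝ, 0 < c ∧ x + c • (x - y) ∈ C}

section minimalFace

variable {C : Set V} {x : V}

theorem self_mem_minimalFace (hx : x ∈ C) : x ∈ minimalFace C x :=
  ⟨hx, 1, one_pos, by simpa using hx⟩

theorem convex_minimalFace (hC : Convex ℝ C) (hx : x ∈ C) : Convex ℝ (minimalFace C x) := by
  rintro y₁ ⟨hy₁, c₁, hc₁, hq₁⟩ y₂ ⟨hy₂, c₂, hc₂, hq₂⟩ a b ha hb hab
  set c := min c₁ c₂
  have hc : 0 < c := lt_min hc₁ hc₂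
  have hq₁' := hC.add_smul_mem_of_le hx hq₁ hc.le (min_le_left c₁ c₂)
  have hq₂' := hC.add_smul_mem_of_le hx hq₂ hc.le (min_le_right c₁ c₂)
  refine ⟨hC hy₁ hy₂ ha hb hab, c, hc, ?_⟩
  obtain rfl : b = 1 - a := by linarith
  have hcombo : x + c • (x - (a • y₁ + (1 - a) • y₂)) =
      a • (x + c • (x - y₁)) + (1 - a) • (x + c • (x - y₂)) := by
    module
  exact hcombo ▸ hC hq₁' hq₂' ha hb hab

theorem mem_minimalFace_of_combo_mem (hC : Convex ℝ C) {a b : V} (ha : a ∈ C) (hb : b ∈ C)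
    {t : ℝ} (ht₀ : 0 < t) (ht₁ : t < 1) (hp : t • a + (1 - t) • b ∈ minimalFace C x) :
    a ∈ minimalFace C x := by
  obtain ⟨-, c, hc, hq⟩ := hp
  have hd : 0 < 1 + c * (1 - t) := by nlinarith
  refine ⟨ha, c * t / (1 + c * (1 - t)), by positivity, ?_⟩
  -- the weights are chosen so that `b` cancels against the `b` inside the prolongation point
  have hcombo : x + (c * t / (1 + c * (1 - t))) • (x - a) =
      (1 + c * (1 - t))⁻¹ • (x + c • (x - (t • a + (1 - t) • b))) +
        (c * (1 - t) / (1 + c * (1 - t))) • b := by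
    match_scalars <;> field_simp <;> ring
  rw [hcombo]
  exact hC hq hb (by positivity) (div_nonneg (by nlinarith) hd.le) (by field_simp)

theorem isFace_minimalFace (hC : Convex ℝ C) (hx : x ∈ C) : IsFace C (minimalFace C x) := by
  refine ⟨fun y hy => hy.1, convex_minimalFace hC hx, fun a ha b hb t ht₀ ht₁ hp => ?_⟩
  refine ⟨mem_minimalFace_of_combo_mem hC ha hb ht₀ ht₁ hp,
    mem_minimalFace_of_combo_mem hC hb ha (sub_pos.2 ht₁) (sub_lt_self 1 ht₀) ?_⟩
  rwa [sub_sub_cancel, add_comm]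

theorem add_smul_sub_mem_minimalFace (hC : Convex ℝ C) (hx : x ∈ C) {y : V} {c s : ℝ}
    (hy : y ∈ C) (hq : x + c • (x - y) ∈ C) (hs : 0 < s) (hsc : s ≤ c) :
    x + s • (x - y) ∈ minimalFace C x := by
  refine ⟨hC.add_smul_mem_of_le hx hq hs.le hsc, s⁻¹, inv_pos.2 hs, ?_⟩
  have hback : x + s⁻¹ • (x - (x + s • (x - y))) = y := by
    rw [sub_add_cancel_left, smul_neg, smul_smul, inv_mul_cancel₀ hs.ne', one_smul]
    abel
  rwa [hback]

theorem isAlgInterior_minimalFace (hC : Convex ℝ C) (hx : x ∈ C) :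
    IsAlgInterior (minimalFace C x) x := by
  refine ⟨self_mem_minimalFace hx, fun y ⟨hy, c, hc, hq⟩ => ⟨1 + c / 2, by linarith, ?_⟩⟩
  have hprolong : (1 - (1 + c / 2)) • y + (1 + c / 2) • x = x + (c / 2) • (x - y) := by
    module
  rw [hprolong]
  exact add_smul_sub_mem_minimalFace hC hx hy hq (by positivity) (by linarith)

theorem IsFace.minimalFace_subset {G : Set V} (hG : IsFace C G) (hxG : x ∈ G) :
    minimalFace C x ⊆ G := by
  rintro y ⟨hy, c, hc, hq⟩
  have hcombo : (c / (1 + c)) • y + (1 - c / (1 + c)) • (x + c • (x - y)) = x := by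
    match_scalars <;> field_simp <;> ring
  have hlt : c / (1 + c) < 1 := (div_lt_one (by positivity)).2 (by linarith)
  exact (hG.2.2 y hy _ hq _ (by positivity) hlt (by rwa [hcombo])).1

end minimalFace

/-- Every point `x` of a convex set `C` determines a unique face `F` of `C` in which `x`
is an algebraic interior point; moreover `F` is the smallest face of `C` containing `x`. -/
theorem exists_unique_face_algInterior {C : Set V} (hC : Convex ℝ C) {x : V} (hx : x ∈ C) :
    ∃! F : Set V, IsFace C F ∧ IsAlgInterior F x ∧
      ∀ G : Set V, IsFace C G → x ∈ G → F ⊆ G := by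
  refine ⟨minimalFace C x, ⟨isFace_minimalFace hC hx, isAlgInterior_minimalFace hC hx,
    fun G hG hxG => hG.minimalFace_subset hxG⟩, ?_⟩
  rintro F ⟨hF, hFx, hFmin⟩
  exact (hFmin _ (isFace_minimalFace hC hx) (self_mem_minimalFace hx)).antisymm
    (hF.minimalFace_subset hFx.1)
end

section
/- Let P be a convex cone of linear maps, let CP ⊆ P be a convex subcone (the 'completely positive' maps), and call Φ ∈ P optimal if for every φ ∈ CP and every t > 1, the map (1−t)φ + tΦ does not belong to P. Then Φ is optimal if and only if the smallest face of P containing Φ contains no nonzero element of CP. (Precisely: if Φ is an algebraic interior point of a face F of P, then Φ is optimal iff F ∩ CP ⊆ {0}.) -/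
variable {V : Type*} [AddCommGroup V] [Module ℝ V]

/-!
Writing `ψ = (1 - t) • φ + t • Φ` with `t > 1`, the point `Φ = t⁻¹ • ψ + (1 - t⁻¹) • φ` is a proper
convex combination of `ψ` and `φ`; so if both lie in `P`, the face through `Φ` contains `φ`.
Conversely, an algebraic interior point `Φ` of `F` can be pushed past any `φ ∈ F` without leaving
`F ⊆ P`.
-/

lemma IsFace.mem_of_extension_mem {P F : Set V} (hF : IsFace P F) {Φ φ : V} (hΦ : Φ ∈ F)
    (hφ : φ ∈ P) {t : ℝ} (ht : 1 < t) (hext : (1 - t) • φ + t • Φ ∈ P) : φ ∈ F := by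
  have ht0 : 0 < t := one_pos.trans ht
  have hcomb : t⁻¹ • ((1 - t) • φ + t • Φ) + (1 - t⁻¹) • φ = Φ := by
    match_scalars
    · field_simp
      ring
    · field_simp
  refine (hF.2.2 _ hext _ hφ t⁻¹ (inv_pos.2 ht0) (inv_lt_one_of_one_lt₀ ht) ?_).2
  rwa [hcomb]

theorem optimal_iff_face_no_CP_general
    {P CP : Set V}
    (hCPsub : CP ⊆ P)
    {F : Set V} (hF : IsFace P F) {Φ : V} (hΦ : IsAlgInterior F Φ) :
    (∀ φ ∈ CP, φ ≠ 0 → ∀ t : ℝ, 1 < t → (1 - t) • φ + t • Φ ∉ P) ↔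
      F ∩ CP ⊆ {0} := by
  constructor
  · rintro hopt φ ⟨hφF, hφCP⟩
    by_contra hφne
    obtain ⟨t, ht, hext⟩ := hΦ.2 φ hφF
    exact hopt φ hφCP hφne t ht (hF.1 hext)
  · intro hsub φ hφCP hφne t ht hext
    exact hφne (hsub ⟨hF.mem_of_extension_mem hΦ.1 (hCPsub hφCP) ht hext, hφCP⟩)

/-- Let `P` be a convex cone and `CP ⊆ P` a convex subcone.  If `Φ` is an algebraic
interior point of a face `F` of `P`, then `Φ` is optimal (for every nonzero `φ ∈ CP`
and `t > 1`, `(1-t) • φ + t • Φ ∉ P`) if and only if `F` contains no nonzero element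
of `CP`. -/
theorem optimal_iff_face_no_CP [FiniteDimensional ℝ V]
    {P CP : Set V} (hP : Convex ℝ P)
    (hPcone : ∀ c : ℝ, 0 ≤ c → ∀ v ∈ P, c • v ∈ P)
    (hCPsub : CP ⊆ P) (hCPconv : Convex ℝ CP)
    (hCPcone : ∀ c : ℝ, 0 ≤ c → ∀ v ∈ CP, c • v ∈ CP)
    {F : Set V} (hF : IsFace P F) {Φ : V} (hΦ : IsAlgInterior F Φ) :
    (∀ φ ∈ CP, φ ≠ 0 → ∀ t : ℝ, 1 < t → (1 - t) • φ + t • Φ ∉ P) ↔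
      F ∩ CP ⊆ {0} :=
  optimal_iff_face_no_CP_general hCPsub hF hΦ
end

section
/- A completely copositive map φ^W (with φ^W(X) = W* Xᵗ W for an m×n matrix W) is completely positive if and only if W has rank at most one; moreover when W = x y* for column vectors x ∈ ℂᵐ, y ∈ ℂⁿ, one has φ^{x y*} = φ_{x̄ y*}, where φ_V(X) = V* X V. -/
open Matrix

/-- A map `M_m(ℂ) → M_n(ℂ)` is completely positive if it is a finite sum of maps
`φ_V : X ↦ V* X V`. -/
def IsCPFun {m n : ℕ}
    (f : Matrix (Fin m) (Fin m) ℂ → Matrix (Fin n) (Fin n) ℂ) : Prop :=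
  ∃ (k : ℕ) (V : Fin k → Matrix (Fin m) (Fin n) ℂ),
    ∀ X, f X = ∑ i, (V i)ᴴ * X * (V i)

/-!
Test `W* Xᵀ W = ∑ Vᵢ* X Vᵢ` against `X = a bᵀ` between `u` and `u'`. For `b = ā`, `u' = u` this
reads `|a ⬝ Wu|² = ∑ |ā ⬝ Vᵢu|²`, so a functional `a` killing `Wu` also makes every `ā ⬝ Vᵢu`
vanish; taking then `b = Wu` shows that `a` kills the whole range of `W` as soon as `Wu ≠ 0`.
Hence the range of `W` is the line through any of its nonzero vectors.

Conversely, `x̄ᵀ Xᵀ x = xᵀ X x̄` gives `φ^{x cᵀ} = φ_{x̄ cᵀ}`.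
-/

section RankOne

variable {K : Type*} [Field K] {m n : Type*} [Fintype n]

theorem Matrix.rank_le_one_iff_exists_range_le_span_singleton (A : Matrix m n K) :
    A.rank ≤ 1 ↔ ∃ v, LinearMap.range A.mulVecLin ≤ K ∙ v := by
  rw [rank, ← rank_submodule_le_one_iff', ← Module.finrank_eq_rank, Nat.cast_le_one]

theorem Matrix.rank_le_one_iff_exists_eq_vecMulVec (A : Matrix m n K) :
    A.rank ≤ 1 ↔ ∃ x c, A = vecMulVec x c := by
  refine ⟨fun h => ?_, fun ⟨x, c, hA⟩ => hA ▸ rank_vecMulVec_le x c⟩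
  obtain ⟨x, hx⟩ := A.rank_le_one_iff_exists_range_le_span_singleton.mp h
  have hcol : ∀ j, ∃ c : K, c • x = A.col j := fun j =>
    Submodule.mem_span_singleton.mp <| hx <| A.range_mulVecLin ▸ Submodule.subset_span ⟨j, rfl⟩
  choose c hc using hcol
  exact ⟨x, c, ext fun i j => by simpa [vecMulVec_apply, mul_comm] using (congrFun (hc j) i).symm⟩

theorem Matrix.rank_le_one_of_forall_dotProduct_mulVec_eq_zero [Fintype m] (A : Matrix m n K)
    (h : ∀ a u, a ⬝ᵥ A *ᵥ u = 0 → A *ᵥ u ≠ 0 → ∀ u', a ⬝ᵥ A *ᵥ u' = 0) : A.rank ≤ 1 := by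
  classical
  rw [rank_le_one_iff_exists_range_le_span_singleton]
  by_cases hA : ∃ u, A *ᵥ u ≠ 0
  · obtain ⟨u, hu⟩ := hA
    refine ⟨A *ᵥ u, ?_⟩
    rw [← Subspace.dualAnnihilator_le_dualAnnihilator_iff]
    intro f hf
    obtain ⟨a, rfl⟩ := (dotProductEquiv K m).surjective f
    simp only [Submodule.mem_dualAnnihilator, Submodule.mem_span_singleton] at hf ⊢
    rintro _ ⟨u', rfl⟩
    exact h a u (by simpa using hf _ ⟨1, one_smul _ _⟩) hu u'
  · push Not at hA
    exact ⟨0, by rintro _ ⟨u, rfl⟩; simp [hA u]⟩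

end RankOne

section TransposeCongruence

variable {R : Type*} {m n ι : Type*} [Fintype m]

theorem conjTranspose_vecMulVec_mul_transpose_mul_vecMulVec [CommSemiring R] [StarRing R]
    (x : m → R) (c : n → R) (X : Matrix m m R) :
    (vecMulVec x c)ᴴ * Xᵀ * vecMulVec x c = (vecMulVec (star x) c)ᴴ * X * vecMulVec (star x) c := by
  simp only [conjTranspose_vecMulVec, star_star, vecMulVec_mul, vecMul_vecMulVec, vecMul_transpose]
  rw [dotProduct_comm, dotProduct_mulVec]

variable [Fintype n] [Fintype ι]

theorem star_mulVec_dotProduct_mul_dotProduct_mulVec_eq_sum [CommSemiring R] [StarRing R]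
    {W : Matrix m n R} {V : ι → Matrix m n R}
    (hV : ∀ X : Matrix m m R, Wᴴ * Xᵀ * W = ∑ i, (V i)ᴴ * X * V i)
    (a b : m → R) (u u' : n → R) :
    (star (W *ᵥ u) ⬝ᵥ b) * (a ⬝ᵥ W *ᵥ u') = ∑ i, (star (V i *ᵥ u) ⬝ᵥ a) * (b ⬝ᵥ V i *ᵥ u') := by
  simpa [transpose_vecMulVec, ← mulVec_mulVec, vecMulVec_mulVec, sum_mulVec, dotProduct_sum,
    dotProduct_mulVec, ← star_mulVec, mul_comm]
    using congrArg (fun M => star u ⬝ᵥ M *ᵥ u') (hV (vecMulVec a b))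

theorem dotProduct_mulVec_eq_zero_of_transpose_congr_eq_sum
    [CommRing R] [PartialOrder R] [StarRing R] [StarOrderedRing R] [NoZeroDivisors R]
    {W : Matrix m n R} {V : ι → Matrix m n R}
    (hV : ∀ X : Matrix m m R, Wᴴ * Xᵀ * W = ∑ i, (V i)ᴴ * X * V i)
    {a : m → R} {u : n → R} (ha : a ⬝ᵥ W *ᵥ u = 0) (hu : W *ᵥ u ≠ 0) (u' : n → R) :
    a ⬝ᵥ W *ᵥ u' = 0 := by
  have hVa : ∀ i, star a ⬝ᵥ V i *ᵥ u = 0 := by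
    have h := star_mulVec_dotProduct_mul_dotProduct_mulVec_eq_sum hV a (star a) u u
    simp only [ha, mul_zero, star_dotProduct (V _ *ᵥ u)] at h
    exact congrFun (dotProduct_star_self_eq_zero.mp h.symm)
  have h := star_mulVec_dotProduct_mul_dotProduct_mulVec_eq_sum hV a (W *ᵥ u) u u'
  simpa only [star_dotProduct (V _ *ᵥ u), hVa, star_zero, zero_mul, Finset.sum_const_zero,
    mul_eq_zero, dotProduct_star_self_eq_zero, hu, false_or] using h

end TransposeCongruence

open scoped ComplexOrder in
theorem rank_le_one_of_isCPFun_conjTranspose_mul_transpose_mul {m n : ℕ}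
    {W : Matrix (Fin m) (Fin n) ℂ} (hW : IsCPFun fun (X : Matrix (Fin m) (Fin m) ℂ) => Wᴴ * Xᵀ * W) : W.rank ≤ 1 :=
  let ⟨_, _, hV⟩ := hW
  W.rank_le_one_of_forall_dotProduct_mulVec_eq_zero fun _ _ ha hu =>
    dotProduct_mulVec_eq_zero_of_transpose_congr_eq_sum hV ha hu

theorem isCPFun_conjTranspose_vecMulVec_mul_transpose_mul {m n : ℕ} (x : Fin m → ℂ)
    (c : Fin n → ℂ) :
    IsCPFun fun (X : Matrix (Fin m) (Fin m) ℂ) => (vecMulVec x c)ᴴ * Xᵀ * vecMulVec x c :=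
  ⟨1, fun _ => vecMulVec (star x) c, fun X => by
    rw [Fin.sum_univ_one]
    exact conjTranspose_vecMulVec_mul_transpose_mul_vecMulVec x c X⟩

/-- The completely copositive map `φ^W : X ↦ W* Xᵗ W` is completely positive if and
only if `W` has rank at most one; moreover for `W = x y*` one has
`φ^{x y*} = φ_{x̄ y*}` where `φ_V(X) = V* X V`. -/
theorem phi_sup_is_CP_iff_rank_le_one {m n : ℕ} :
    (∀ W : Matrix (Fin m) (Fin n) ℂ,
      (IsCPFun fun (X : Matrix (Fin m) (Fin m) ℂ) => Wᴴ * Xᵀ * W) ↔ W.rank ≤ 1) ∧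
    (∀ (x : Fin m → ℂ) (y : Fin n → ℂ) (X : Matrix (Fin m) (Fin m) ℂ),
      (Matrix.vecMulVec x (star y))ᴴ * Xᵀ * Matrix.vecMulVec x (star y) =
        (Matrix.vecMulVec (star x) (star y))ᴴ * X *
          Matrix.vecMulVec (star x) (star y)) := by
  refine ⟨fun W => ⟨rank_le_one_of_isCPFun_conjTranspose_mul_transpose_mul, fun hW => ?_⟩,
    fun x y => conjTranspose_vecMulVec_mul_transpose_mul_vecMulVec x (star y)⟩
  obtain ⟨x, c, rfl⟩ := W.rank_le_one_iff_exists_eq_vecMulVec.mp hW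
  exact isCPFun_conjTranspose_vecMulVec_mul_transpose_mul x c
end

section
/- If a convex cone D contains two subcones C₁ (completely positive maps) and C₂ (completely copositive maps) with D = C₁ + C₂, and some nonzero element A lies in the algebraic interior of both the subset σ(E,0) := C₁-cone generated by {φ_V : V ∈ E} and the subset σ(0,E) := C₂-cone generated by {φ^W : W ∈ E} for the same subspace E, and σ(E,0) ≠ σ(0,E), then σ(0,E) is not a face of D. -/
open Matrix

variable {m n : ℕ}

/-- The cone `σ(E,0)` of completely positive maps generated by `{φ_V : V ∈ E}`,
where `φ_V(X) = V* X V`. -/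
def sigmaCP (E : Submodule ℂ (Matrix (Fin m) (Fin n) ℂ)) :
    Set (Matrix (Fin m) (Fin m) ℂ →ₗ[ℂ] Matrix (Fin n) (Fin n) ℂ) :=
  {φ | ∃ (k : ℕ) (V : Fin k → Matrix (Fin m) (Fin n) ℂ),
    (∀ i, V i ∈ E) ∧ ∀ X, φ X = ∑ i, (V i)ᴴ * X * (V i)}

/-- The cone `σ(0,E)` of completely copositive maps generated by `{φ^W : W ∈ E}`,
where `φ^W(X) = W* Xᵗ W`. -/
def sigmaCoCP (E : Submodule ℂ (Matrix (Fin m) (Fin n) ℂ)) :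
    Set (Matrix (Fin m) (Fin m) ℂ →ₗ[ℂ] Matrix (Fin n) (Fin n) ℂ) :=
  {φ | ∃ (k : ℕ) (W : Fin k → Matrix (Fin m) (Fin n) ℂ),
    (∀ i, W i ∈ E) ∧ ∀ X, φ X = ∑ i, (W i)ᴴ * Xᵀ * (W i)}

/-- The cone `D` of decomposable maps: sums of a completely positive and a completely
copositive map. -/
def Dcone (m n : ℕ) :
    Set (Matrix (Fin m) (Fin m) ℂ →ₗ[ℂ] Matrix (Fin n) (Fin n) ℂ) :=
  {φ | ∃ ψ₁ ∈ sigmaCP (⊤ : Submodule ℂ (Matrix (Fin m) (Fin n) ℂ)),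
    ∃ ψ₂ ∈ sigmaCoCP (⊤ : Submodule ℂ (Matrix (Fin m) (Fin n) ℂ)), φ = ψ₁ + ψ₂}

/-- `F` is a face of the convex cone `D`: a subset such that whenever a sum of two
elements of `D` lies in `F`, both summands lie in `F`. -/
def IsFaceCone {α : Type*} [Add α] (D F : Set α) : Prop :=
  F ⊆ D ∧ ∀ x ∈ D, ∀ y ∈ D, x + y ∈ F → x ∈ F ∧ y ∈ F

/-- `A` is an algebraic interior point of the convex subset `S`. -/
def IsAlgInteriorPt
    (S : Set (Matrix (Fin m) (Fin m) ℂ →ₗ[ℂ] Matrix (Fin n) (Fin n) ℂ))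
    (A : Matrix (Fin m) (Fin m) ℂ →ₗ[ℂ] Matrix (Fin n) (Fin n) ℂ) : Prop :=
  A ∈ S ∧ ∀ B ∈ S, ∃ t : ℝ, 1 < t ∧ (((1 - t : ℝ) : ℂ)) • B + ((t : ℂ)) • A ∈ S

/-!
Precomposition with the transpose is an additive involution of the space of maps that preserves
`D` and exchanges `σ(E,0)` and `σ(0,E)`, so if `σ(0,E)` were a face of `D`, so would be `σ(E,0)`.
A face `F` of a cone `D` containing an algebraic interior point `A` of a convex subset `S ⊆ D`
contains all of `S`: for `B ∈ S`, `A` is a positive combination of `B` and a point of `S` lying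
beyond `A` on the line from `B`, and faces are closed under taking summands. Applied in both
directions, this forces `σ(E,0) = σ(0,E)`.
-/

theorem IsFaceCone.preimage {α β : Type*} [Add α] [Add β] {D F : Set β}
    (hF : IsFaceCone D F) (f : α →ₙ+ β) : IsFaceCone (f ⁻¹' D) (f ⁻¹' F) :=
  ⟨Set.preimage_mono hF.1, fun x hx y hy hxy =>
    hF.2 (f x) hx (f y) hy (by rwa [Set.mem_preimage, map_add] at hxy)⟩

section RealCone

variable {M : Type*} [AddCommGroup M] [Module ℝ M] {D F : Set M}

theorem IsFaceCone.mem_of_smul_add_smul_mem (hF : IsFaceCone D F)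
    (hFsmul : ∀ r : ℝ, 0 < r → ∀ x ∈ F, r • x ∈ F) (hDsmul : ∀ r : ℝ, 0 < r → ∀ x ∈ D, r • x ∈ D)
    {x y : M} (hx : x ∈ D) (hy : y ∈ D) {a b : ℝ} (ha : 0 < a) (hb : 0 < b)
    (hxy : a • x + b • y ∈ F) : y ∈ F := by
  have hby : b • y ∈ F := (hF.2 _ (hDsmul a ha x hx) _ (hDsmul b hb y hy) hxy).2
  simpa [inv_smul_smul₀ hb.ne'] using hFsmul b⁻¹ (inv_pos.2 hb) _ hby

theorem IsFaceCone.subset_of_extend_mem (hF : IsFaceCone D F)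
    (hFsmul : ∀ r : ℝ, 0 < r → ∀ x ∈ F, r • x ∈ F) (hDsmul : ∀ r : ℝ, 0 < r → ∀ x ∈ D, r • x ∈ D)
    {S : Set M} (hSD : S ⊆ D) {A : M} (hA : A ∈ F)
    (hext : ∀ B ∈ S, ∃ t : ℝ, 1 < t ∧ (1 - t) • B + t • A ∈ S) : S ⊆ F := by
  intro B hB
  obtain ⟨t, ht, hC⟩ := hext B hB
  have ht0 : t ≠ 0 := by positivity
  have hA_eq : t⁻¹ • ((1 - t) • B + t • A) + (1 - t⁻¹) • B = A := by
    rw [smul_add, smul_smul, smul_smul, inv_mul_cancel₀ ht0, mul_sub, mul_one,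
      inv_mul_cancel₀ ht0]
    module
  exact hF.mem_of_smul_add_smul_mem hFsmul hDsmul (hSD hC) (hSD hB) (by positivity)
    (sub_pos.2 (inv_lt_one_of_one_lt₀ ht)) (hA_eq ▸ hA)

end RealCone

theorem IsFaceCone.subset_of_isAlgInteriorPt
    {D F S : Set (Matrix (Fin m) (Fin m) ℂ →ₗ[ℂ] Matrix (Fin n) (Fin n) ℂ)}
    (hF : IsFaceCone D F)
    (hFsmul : ∀ r : ℝ, 0 < r → ∀ x ∈ F, r • x ∈ F) (hDsmul : ∀ r : ℝ, 0 < r → ∀ x ∈ D, r • x ∈ D)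
    (hSD : S ⊆ D) {A : Matrix (Fin m) (Fin m) ℂ →ₗ[ℂ] Matrix (Fin n) (Fin n) ℂ} (hA : A ∈ F)
    (hint : IsAlgInteriorPt S A) : S ⊆ F :=
  -- `((r : ℝ) : ℂ) • φ` is definitionally `r • φ`
  hF.subset_of_extend_mem hFsmul hDsmul hSD hA hint.2

theorem conjTranspose_mul_mul_of_sqrt_smul {k l : Type*} [Fintype k] [Fintype l] {r : ℝ}
    (hr : 0 ≤ r) (V : Matrix k l ℂ) (Y : Matrix k k ℂ) :
    (((√r : ℝ) : ℂ) • V)ᴴ * Y * (((√r : ℝ) : ℂ) • V) = r • (Vᴴ * Y * V) := by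
  rw [conjTranspose_smul, Complex.star_def, Complex.conj_ofReal, Matrix.smul_mul, Matrix.smul_mul,
    Matrix.mul_smul, smul_smul, ← Complex.ofReal_mul, Real.mul_self_sqrt hr, Complex.coe_smul]

def precompTranspose :
    (Matrix (Fin m) (Fin m) ℂ →ₗ[ℂ] Matrix (Fin n) (Fin n) ℂ) →ₗ[ℂ]
      Matrix (Fin m) (Fin m) ℂ →ₗ[ℂ] Matrix (Fin n) (Fin n) ℂ :=
  LinearMap.lcomp ℂ _ (transposeLinearEquiv (Fin m) (Fin m) ℂ ℂ).toLinearMap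

section Cones

variable {E : Submodule ℂ (Matrix (Fin m) (Fin n) ℂ)}
  {φ : Matrix (Fin m) (Fin m) ℂ →ₗ[ℂ] Matrix (Fin n) (Fin n) ℂ}

theorem smul_mem_sigmaCP {r : ℝ} (hr : 0 ≤ r) (h : φ ∈ sigmaCP E) : r • φ ∈ sigmaCP E := by
  obtain ⟨k, V, hV, hφ⟩ := h
  refine ⟨k, fun i => ((√r : ℝ) : ℂ) • V i, fun i => E.smul_mem _ (hV i), fun X => ?_⟩
  simp only [conjTranspose_mul_mul_of_sqrt_smul hr, LinearMap.smul_apply, hφ, Finset.smul_sum]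

theorem smul_mem_sigmaCoCP {r : ℝ} (hr : 0 ≤ r) (h : φ ∈ sigmaCoCP E) :
    r • φ ∈ sigmaCoCP E := by
  obtain ⟨k, W, hW, hφ⟩ := h
  refine ⟨k, fun i => ((√r : ℝ) : ℂ) • W i, fun i => E.smul_mem _ (hW i), fun X => ?_⟩
  simp only [conjTranspose_mul_mul_of_sqrt_smul hr, LinearMap.smul_apply, hφ, Finset.smul_sum]

theorem sigmaCP_subset_Dcone (E : Submodule ℂ (Matrix (Fin m) (Fin n) ℂ)) :
    sigmaCP E ⊆ Dcone m n := fun φ ⟨k, V, _, hφ⟩ =>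
  ⟨φ, ⟨k, V, fun _ => Submodule.mem_top, hφ⟩, 0,
    ⟨0, finZeroElim, finZeroElim, fun X => by simp⟩, (add_zero φ).symm⟩

theorem sigmaCoCP_subset_Dcone (E : Submodule ℂ (Matrix (Fin m) (Fin n) ℂ)) :
    sigmaCoCP E ⊆ Dcone m n := fun φ ⟨k, W, _, hφ⟩ =>
  ⟨0, ⟨0, finZeroElim, finZeroElim, fun X => by simp⟩, φ,
    ⟨k, W, fun _ => Submodule.mem_top, hφ⟩, (zero_add φ).symm⟩

theorem smul_mem_Dcone {r : ℝ} (hr : 0 ≤ r) (h : φ ∈ Dcone m n) : r • φ ∈ Dcone m n := by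
  obtain ⟨ψ₁, h₁, ψ₂, h₂, rfl⟩ := h
  exact ⟨r • ψ₁, smul_mem_sigmaCP hr h₁, r • ψ₂, smul_mem_sigmaCoCP hr h₂, smul_add r ψ₁ ψ₂⟩

@[simp]
theorem precompTranspose_apply (X : Matrix (Fin m) (Fin m) ℂ) : precompTranspose φ X = φ Xᵀ :=
  rfl

@[simp]
theorem precompTranspose_precompTranspose : precompTranspose (precompTranspose φ) = φ := by
  ext X : 1
  simp

theorem precompTranspose_mem_sigmaCP_iff : precompTranspose φ ∈ sigmaCP E ↔ φ ∈ sigmaCoCP E :=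
  exists₂_congr fun _ _ => and_congr_right fun _ =>
    ⟨fun h X => by simpa using h Xᵀ, fun h X => h Xᵀ⟩

theorem precompTranspose_mem_sigmaCoCP_iff : precompTranspose φ ∈ sigmaCoCP E ↔ φ ∈ sigmaCP E :=
  exists₂_congr fun _ _ => and_congr_right fun _ =>
    ⟨fun h X => by simpa using h Xᵀ, fun h X => by simpa using h Xᵀ⟩

theorem precompTranspose_mem_Dcone (h : φ ∈ Dcone m n) : precompTranspose φ ∈ Dcone m n := by
  obtain ⟨ψ₁, h₁, ψ₂, h₂, rfl⟩ := h
  exact ⟨_, precompTranspose_mem_sigmaCP_iff.2 h₂, _, precompTranspose_mem_sigmaCoCP_iff.2 h₁,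
    by rw [map_add, add_comm]⟩

theorem precompTranspose_mem_Dcone_iff : precompTranspose φ ∈ Dcone m n ↔ φ ∈ Dcone m n :=
  ⟨fun h => by simpa using precompTranspose_mem_Dcone h, precompTranspose_mem_Dcone⟩

theorem IsFaceCone.sigmaCP_of_sigmaCoCP (hF : IsFaceCone (Dcone m n) (sigmaCoCP E)) :
    IsFaceCone (Dcone m n) (sigmaCP E) := by
  simpa [Set.preimage, precompTranspose_mem_Dcone_iff, precompTranspose_mem_sigmaCoCP_iff]
    using hF.preimage precompTranspose.toAddHom

end Cones

theorem sigmaCoCP_not_face_general {m n : ℕ} (E : Submodule ℂ (Matrix (Fin m) (Fin n) ℂ))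
    (A : Matrix (Fin m) (Fin m) ℂ →ₗ[ℂ] Matrix (Fin n) (Fin n) ℂ)
    (h1 : IsAlgInteriorPt (sigmaCP E) A) (h2 : IsAlgInteriorPt (sigmaCoCP E) A)
    (hne : sigmaCP E ≠ sigmaCoCP E) :
    ¬ IsFaceCone (Dcone m n) (sigmaCoCP E) := by
  intro hCo
  have hCP : IsFaceCone (Dcone m n) (sigmaCP E) := hCo.sigmaCP_of_sigmaCoCP
  have hD : ∀ r : ℝ, 0 < r → ∀ φ ∈ Dcone m n, r • φ ∈ Dcone m n :=
    fun _ hr _ => smul_mem_Dcone hr.le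
  refine hne (Set.Subset.antisymm ?_ ?_)
  · exact hCo.subset_of_isAlgInteriorPt (fun _ hr _ => smul_mem_sigmaCoCP hr.le) hD
      (sigmaCP_subset_Dcone E) h2.1 h1
  · exact hCP.subset_of_isAlgInteriorPt (fun _ hr _ => smul_mem_sigmaCP hr.le) hD
      (sigmaCoCP_subset_Dcone E) h1.1 h2

/-- If a nonzero map `A` is a common algebraic interior point of the two distinct
subsets `σ(E,0)` and `σ(0,E)` of the decomposable cone `D`, then `σ(0,E)` is not a
face of `D`. -/
theorem sigmaCoCP_not_face {m n : ℕ} (E : Submodule ℂ (Matrix (Fin m) (Fin n) ℂ))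
    (A : Matrix (Fin m) (Fin m) ℂ →ₗ[ℂ] Matrix (Fin n) (Fin n) ℂ) (hA : A ≠ 0)
    (h1 : IsAlgInteriorPt (sigmaCP E) A) (h2 : IsAlgInteriorPt (sigmaCoCP E) A)
    (hne : sigmaCP E ≠ sigmaCoCP E) :
    ¬ IsFaceCone (Dcone m n) (sigmaCoCP E) :=
  sigmaCoCP_not_face_general E A h1 h2 hne
end

section
/- The 4-dimensional subspace E of ℂ³⊗ℂ³ spanned by the vectors |00⟩+|11⟩+|22⟩, λ|01⟩+μ|10⟩, λ|12⟩+μ|21⟩, λ|20⟩+μ|02⟩ (with λμ = 1, λ,μ > 0, λ ≠ 1) contains no nonzero product vector; that is, E is completely entangled. -/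
/-- `|00⟩ + |11⟩ + |22⟩`. -/
def w0 : Fin 3 × Fin 3 → ℂ := fun p => if p.1 = p.2 then 1 else 0

/-- `λ|01⟩ + μ|10⟩`. -/
def w1 (lam mu : ℝ) : Fin 3 × Fin 3 → ℂ :=
  fun p => if p = (0, 1) then (lam : ℂ) else if p = (1, 0) then (mu : ℂ) else 0

/-- `λ|12⟩ + μ|21⟩`. -/
def w2 (lam mu : ℝ) : Fin 3 × Fin 3 → ℂ :=
  fun p => if p = (1, 2) then (lam : ℂ) else if p = (2, 1) then (mu : ℂ) else 0

/-- `λ|20⟩ + μ|02⟩`. -/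
def w3 (lam mu : ℝ) : Fin 3 × Fin 3 → ℂ :=
  fun p => if p = (2, 0) then (lam : ℂ) else if p = (0, 2) then (mu : ℂ) else 0

/-- The 4-dimensional subspace `E` of `ℂ³ ⊗ ℂ³`. -/
noncomputable def Espan (lam mu : ℝ) : Submodule ℂ (Fin 3 × Fin 3 → ℂ) :=
  Submodule.span ℂ {w0, w1 lam mu, w2 lam mu, w3 lam mu}

/-!
Write an element of `E` as the matrix `a·I + b·w₁ + c·w₂ + d·w₃`. A product vector is a matrix
of rank at most one, so all its `2 × 2` minors vanish. The three principal minors give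
`a² = λμ b² = b²`, and likewise `a² = c² = d²`; the two minors built from the entries above
and below the diagonal give `λ³ bc = ad = μ³ bc`. Since `λ ≠ μ` forces `λ³ ≠ μ³`, we get
`bc = 0`, hence `a = 0` and then `b = c = d = 0`: the product vector is zero.
-/

def Ematrix {R : Type*} [Mul R] (lam mu a b c d : R) : Matrix (Fin 3) (Fin 3) R :=
  !![a, lam * b, mu * d; mu * b, a, lam * c; lam * d, mu * c, a]

theorem exists_Ematrix_of_mem_Espan {lam mu : ℝ} {v : Fin 3 × Fin 3 → ℂ} (hv : v ∈ Espan lam mu) :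
    ∃ a b c d : ℂ, ∀ i j, v (i, j) = Ematrix (lam : ℂ) mu a b c d i j := by
  simp only [Espan, Submodule.mem_span_insert, Submodule.mem_span_singleton] at hv
  obtain ⟨a, _, ⟨b, _, ⟨c, _, ⟨d, rfl⟩, rfl⟩, rfl⟩, rfl⟩ := hv
  refine ⟨a, b, c, d, fun i j => ?_⟩
  fin_cases i <;> fin_cases j <;> simp [Ematrix, w0, w1, w2, w3, mul_comm]

theorem Ematrix_eq_zero_of_minors_eq_zero {R : Type*} [CommRing R] [NoZeroDivisors R]
    {lam mu a b c d : R} (hmul : lam * mu = 1) (hcube : lam ^ 3 ≠ mu ^ 3)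
    (hminor : ∀ i j k l, Ematrix lam mu a b c d i j * Ematrix lam mu a b c d k l =
      Ematrix lam mu a b c d i l * Ematrix lam mu a b c d k j) :
    Ematrix lam mu a b c d = 0 := by
  have hab := hminor 0 0 1 1
  have hac := hminor 1 1 2 2
  have had := hminor 2 2 0 0
  have hupper := hminor 0 1 1 2
  have hlower := hminor 1 0 2 1
  simp only [Ematrix, Fin.isValue, Matrix.of_apply, Matrix.cons_val', Matrix.cons_val_zero,
    Matrix.cons_val_fin_one, Matrix.cons_val_one, Matrix.cons_val] at hab hac had hupper hlower
  have hbc : b * c = 0 := by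
    have : (lam ^ 3 - mu ^ 3) * (b * c) = 0 := by linear_combination lam * hupper - mu * hlower
    exact (mul_eq_zero.mp this).resolve_left (sub_ne_zero.mpr hcube)
  have ha : a = 0 := by
    rw [← mul_self_eq_zero]
    rcases mul_eq_zero.mp hbc with hb | hc
    · linear_combination hab + lam * mu * b * hb
    · linear_combination hac + lam * mu * c * hc
  have hb : b = 0 := by
    rw [← mul_self_eq_zero]
    linear_combination -hab + a * ha - b ^ 2 * hmul
  have hc : c = 0 := by
    rw [← mul_self_eq_zero]
    linear_combination -hac + a * ha - c ^ 2 * hmul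
  have hd : d = 0 := by
    rw [← mul_self_eq_zero]
    linear_combination -had + a * ha - d ^ 2 * hmul
  subst ha hb hc hd
  ext i j
  fin_cases i <;> fin_cases j <;> simp [Ematrix]

theorem ne_of_mul_eq_one_of_ne_one {R : Type*} [Ring R] [LinearOrder R] [IsStrictOrderedRing R]
    {lam mu : R} (hlam : 0 < lam) (hmul : lam * mu = 1) (hne : lam ≠ 1) :
    lam ≠ mu := by
  rintro rfl
  exact hne ((mul_self_eq_one_iff.mp hmul).resolve_right fun h => (hlam.trans_eq h).asymm neg_one_lt_zero)

theorem eq_zero_or_eq_zero_of_forall_mul_eq_zero {ι κ R : Type*} [MulZeroClass R] [NoZeroDivisors R]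
    {x : ι → R} {y : κ → R} (h : ∀ i j, x i * y j = 0) : x = 0 ∨ y = 0 := by
  by_contra! hxy
  obtain ⟨i, hi⟩ := Function.ne_iff.mp hxy.1
  obtain ⟨j, hj⟩ := Function.ne_iff.mp hxy.2
  exact mul_ne_zero hi hj (h i j)

theorem Espan_completely_entangled_general (lam mu : ℝ) (hlam : 0 < lam)
    (hmul : lam * mu = 1) (hne : lam ≠ 1) :
    ∀ x y : Fin 3 → ℂ, (fun p : Fin 3 × Fin 3 => x p.1 * y p.2) ∈ Espan lam mu →
      x = 0 ∨ y = 0 := by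
  intro x y hxy
  obtain ⟨a, b, c, d, hM⟩ := exists_Ematrix_of_mem_Espan hxy
  replace hM : ∀ i j, x i * y j = Ematrix (lam : ℂ) mu a b c d i j := hM
  have hcube : (lam : ℂ) ^ 3 ≠ (mu : ℂ) ^ 3 := by
    exact_mod_cast (Odd.strictMono_pow (by decide : Odd 3)).injective.ne
      (ne_of_mul_eq_one_of_ne_one hlam hmul hne)
  set M := Ematrix (lam : ℂ) mu a b c d
  have hminor : ∀ i j k l, M i j * M k l = M i l * M k j := fun i j k l => by
    rw [← hM, ← hM, ← hM, ← hM]; ring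
  have hzero : M = 0 := Ematrix_eq_zero_of_minors_eq_zero (by exact_mod_cast hmul) hcube hminor
  exact eq_zero_or_eq_zero_of_forall_mul_eq_zero fun i j => by rw [hM, hzero, Matrix.zero_apply]

/-- For `λ, μ > 0`, `λμ = 1`, `λ ≠ 1`, the subspace `E` spanned by
`|00⟩+|11⟩+|22⟩`, `λ|01⟩+μ|10⟩`, `λ|12⟩+μ|21⟩`, `λ|20⟩+μ|02⟩` is completely
entangled: it contains no nonzero product vector `x ⊗ y`. -/
theorem Espan_completely_entangled (lam mu : ℝ) (hlam : 0 < lam) (hmu : 0 < mu)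
    (hmul : lam * mu = 1) (hne : lam ≠ 1) :
    ∀ x y : Fin 3 → ℂ, (fun p : Fin 3 × Fin 3 => x p.1 * y p.2) ∈ Espan lam mu →
      x = 0 ∨ y = 0 :=
  Espan_completely_entangled_general lam mu hlam hmul hne
end
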